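/- arXiv:1709.00081 — 2 statements merged into one kernel-verified Lean document; each statement's English description precedes it below -/
import Mathlib

section
/- On a probability space, let z take values in a measurable space Z, v take values in a measurable space V, and let u be a real random variable, with z independent of the pair (u, v). Let f_z : Z → ℝ and f_v : V → ℝ be measurable with f_z(z), f_v(v) square-integrable and u square-integrable. Let β ∈ ℝ and define x = f_z(z) + f_v(v) and y = βx + u. Then Cov(f_z(z), y) = β · Var(f_z(z)); in particular, if Var(f_z(z)) ≠ 0 then β = Cov(f_z(z), y)/Var(f_z(z)). -/
open MeasureTheory ProbabilityTheory

/-! Expanding `Cov(f_z(z), β (f_z(z) + f_v(v)) + u)` bilinearly leaves `β Var(f_z(z))` plus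
`β Cov(f_z(z), f_v(v)) + Cov(f_z(z), u)`, and both of these vanish because `f_z(z)` is a
function of `z` while `f_v(v)` and `u` are functions of `(u, v)`, which is independent of `z`. -/

noncomputable def cov {Ωs : Type*} [MeasurableSpace Ωs] (μ : Measure Ωs)
    (X Y : Ωs → ℝ) : ℝ :=
  ∫ ω, (X ω - ∫ ω', X ω' ∂μ) * (Y ω - ∫ ω', Y ω' ∂μ) ∂μ

lemma cov_eq_covariance {Ω : Type*} [MeasurableSpace Ω] (μ : Measure Ω) (X Y : Ω → ℝ) :
    cov μ X Y = cov[X, Y; μ] :=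
  rfl

lemma covariance_const_mul_add_add_of_indepFun {Ω : Type*} [MeasurableSpace Ω] {μ : Measure Ω}
    [IsFiniteMeasure μ] {X W U : Ω → ℝ}
    (hX : MemLp X 2 μ) (hW : MemLp W 2 μ) (hU : MemLp U 2 μ)
    (hXW : X ⟂ᵢ[μ] W) (hXU : X ⟂ᵢ[μ] U) (β : ℝ) :
    cov[X, fun ω => β * (X ω + W ω) + U ω; μ] = β * cov[X, X; μ] := by
  have hXW_add : MemLp (X + W) 2 μ := hX.add hW
  calc cov[X, fun ω => β * (X ω + W ω) + U ω; μ]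
      = cov[X, fun ω => β * (X + W) ω; μ] + cov[X, U; μ] :=
        covariance_add_right hX (hXW_add.const_mul β) hU
    _ = β * (cov[X, X; μ] + cov[X, W; μ]) + cov[X, U; μ] := by
        rw [covariance_const_mul_right, covariance_add_right hX hX hW]
    _ = β * cov[X, X; μ] := by
        rw [hXW.covariance_eq_zero hX hW, hXU.covariance_eq_zero hX hU, add_zero, add_zero]

theorem additive_exposure_identification_general
    {Ωs : Type*} [MeasurableSpace Ωs] (μ : Measure Ωs) [IsProbabilityMeasure μ]
    {Z V : Type*} [MeasurableSpace Z] [MeasurableSpace V]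
    (z : Ωs → Z) (v : Ωs → V)
    (u : Ωs → ℝ) (hu2 : MemLp u 2 μ)
    (hindep : IndepFun z (fun ω => (u ω, v ω)) μ)
    (fz : Z → ℝ) (hfz : Measurable fz) (fv : V → ℝ) (hfv : Measurable fv)
    (hfz2 : MemLp (fun ω => fz (z ω)) 2 μ)
    (hfv2 : MemLp (fun ω => fv (v ω)) 2 μ)
    (β : ℝ)
    (x : Ωs → ℝ) (hx : x = fun ω => fz (z ω) + fv (v ω))
    (y : Ωs → ℝ) (hy : y = fun ω => β * x ω + u ω) :
    cov μ (fun ω => fz (z ω)) y = β * cov μ (fun ω => fz (z ω)) (fun ω => fz (z ω)) ∧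
    (cov μ (fun ω => fz (z ω)) (fun ω => fz (z ω)) ≠ 0 →
      β = cov μ (fun ω => fz (z ω)) y /
        cov μ (fun ω => fz (z ω)) (fun ω => fz (z ω))) := by
  have hindep_v : (fun ω => fz (z ω)) ⟂ᵢ[μ] (fun ω => fv (v ω)) :=
    hindep.comp hfz (hfv.comp measurable_snd)
  have hindep_u : (fun ω => fz (z ω)) ⟂ᵢ[μ] u :=
    hindep.comp hfz measurable_fst
  have hcov :
      cov μ (fun ω => fz (z ω)) y = β * cov μ (fun ω => fz (z ω)) (fun ω => fz (z ω)) := by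
    subst hx hy
    simp only [cov_eq_covariance]
    exact covariance_const_mul_add_add_of_indepFun hfz2 hfv2 hu2 hindep_v hindep_u β
  exact ⟨hcov, fun hvar => eq_div_of_mul_eq hvar hcov.symm⟩

/-- Identification with an additive instrument-exposure equation
(Proposition 2): if `x = f_z(z) + f_v(v)`, `y = βx + u`, and `z ⟂ (u, v)`, then
`Cov(f_z(z), y) = β·Var(f_z(z))`; in particular `β` is identified whenever
`Var(f_z(z)) ≠ 0`. -/
theorem additive_exposure_identification
    {Ωs : Type*} [MeasurableSpace Ωs] (μ : Measure Ωs) [IsProbabilityMeasure μ]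
    {Z V : Type*} [MeasurableSpace Z] [MeasurableSpace V]
    (z : Ωs → Z) (hz : Measurable z) (v : Ωs → V) (hv : Measurable v)
    (u : Ωs → ℝ) (hu2 : MemLp u 2 μ)
    (hindep : IndepFun z (fun ω => (u ω, v ω)) μ)
    (fz : Z → ℝ) (hfz : Measurable fz) (fv : V → ℝ) (hfv : Measurable fv)
    (hfz2 : MemLp (fun ω => fz (z ω)) 2 μ)
    (hfv2 : MemLp (fun ω => fv (v ω)) 2 μ)
    (β : ℝ)
    (x : Ωs → ℝ) (hx : x = fun ω => fz (z ω) + fv (v ω))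
    (y : Ωs → ℝ) (hy : y = fun ω => β * x ω + u ω) :
    cov μ (fun ω => fz (z ω)) y = β * cov μ (fun ω => fz (z ω)) (fun ω => fz (z ω)) ∧
    (cov μ (fun ω => fz (z ω)) (fun ω => fz (z ω)) ≠ 0 →
      β = cov μ (fun ω => fz (z ω)) y /
        cov μ (fun ω => fz (z ω)) (fun ω => fz (z ω))) :=
  additive_exposure_identification_general μ z v u hu2 hindep fz hfz fv hfv hfz2 hfv2 β x hx y hy
end

section
/- In the two-sample binary-IV setting, assume additionally structural invariance of the exposure equation, f^a = f^b = f, and sampling homogeneity of the exposure noise: v^a and v^b have the same distribution on V. Then P(C^a) = P(C^b), and consequently, if P(C^b) > 0, the two-sample Wald ratio equals the local average treatment effect in sample b: β^{ab} := (E[y^b | z^b = 1] − E[y^b | z^b = 0])/(E[x^a | z^a = 1] − E[x^a | z^a = 0]) = E[g^b(1, u^b) − g^b(0, u^b) | C^b]. -/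
/-!
Independence of `z` from `(u, v)` gives `E[y | z = c] = E[g(f(c, v), u)]`, so the numerator of the
Wald ratio is `E[g(f(1, v), u) - g(f(0, v), u)]`. By monotonicity the integrand vanishes off the
compliers `C = v⁻¹(S)`, `S = {w | f(0, w) = 0, f(1, w) = 1}`, where it equals `g(1, u) - g(0, u)`;
with `g(b, _) = 1_{b = 1}` the same computation turns the denominator into `P(C^a)`. As `S` is one
measurable set of `V`, `P(C^a) = P(C^b)` follows from `v^a ∼ v^b`.
-/

open MeasureTheory ProbabilityTheory

/-- Conditional expectation of a real random variable given an event: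
`E[Y | E] = E[Y·1_E]/P(E)`. -/
noncomputable def cexp {Ωs : Type*} [MeasurableSpace Ωs] (μ : Measure Ωs)
    (Y : Ωs → ℝ) (E : Set Ωs) : ℝ :=
  (∫ ω in E, Y ω ∂μ) / (μ E).toReal

lemma cexp_congr {Ω : Type*} [MeasurableSpace Ω] (μ : Measure Ω) {Y Y' : Ω → ℝ} {E : Set Ω}
    (hE : MeasurableSet E) (h : ∀ ω ∈ E, Y ω = Y' ω) : cexp μ Y E = cexp μ Y' E := by
  rw [cexp, cexp, setIntegral_congr_fun hE h]

lemma cexp_preimage_eq_integral_of_indepFun {Ω α : Type*} [MeasurableSpace Ω] [MeasurableSpace α]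
    {μ : Measure Ω} [IsFiniteMeasure μ] {z : Ω → α} {Y : Ω → ℝ} (hz : Measurable z)
    (hY : AEMeasurable Y μ) (hind : IndepFun z Y μ) {E : Set α} (hE : MeasurableSet E)
    (hzE : μ (z ⁻¹' E) ≠ 0) :
    cexp μ Y (z ⁻¹' E) = ∫ ω, Y ω ∂μ := by
  have hmul : ∫ ω in z ⁻¹' E, Y ω ∂μ = μ.real (z ⁻¹' E) * ∫ ω, Y ω ∂μ :=
    Indep.setIntegral_eq_mul (f := id) hz.comap_le ((IndepFun_iff_Indep z Y μ).1 hind) hY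
      ⟨E, hE, rfl⟩ aestronglyMeasurable_id
  rw [cexp, hmul, measureReal_def, mul_div_cancel_left₀]
  exact ENNReal.toReal_ne_zero.2 ⟨hzE, measure_ne_top μ _⟩

section BoolSelection

variable {α β : Type*} {b : α → Bool} {X : Bool → α → β}

lemma apply_bool_eq_piecewise :
    (fun a => X (b a) a) = {a | b a = true}.piecewise (X true) (X false) := by
  ext a
  cases h : b a <;> simp [Set.piecewise, h]

variable [MeasurableSpace α]

lemma measurable_apply_bool [MeasurableSpace β] (hb : Measurable b)
    (hX : ∀ c, Measurable (X c)) : Measurable fun a => X (b a) a := by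
  rw [apply_bool_eq_piecewise]
  exact (hX true).piecewise (hb (measurableSet_singleton true)) (hX false)

lemma integrable_apply_bool [NormedAddCommGroup β] {μ : Measure α} (hb : Measurable b)
    (hX : ∀ c, Integrable (X c) μ) : Integrable (fun a => X (b a) a) μ := by
  rw [apply_bool_eq_piecewise]
  exact Integrable.piecewise (hb (measurableSet_singleton true)) (hX true).integrableOn
    (hX false).integrableOn

end BoolSelection

def compliers {V : Type*} (f : Bool → V → Bool) : Set V :=
  {w | f false w = false ∧ f true w = true}

section Compliers

variable {Ω U V : Type*} {f : Bool → V → Bool}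

lemma apply_sub_apply_eq_indicator_compliers {M : Type*} [AddGroup M]
    (hmono : ∀ w, f false w = true → f true w = true) (h : Bool → M) (w : V) :
    h (f true w) - h (f false w) = (compliers f).indicator (fun _ => h true - h false) w := by
  have := hmono w
  by_cases h0 : f false w <;> by_cases h1 : f true w <;> simp_all [compliers]

variable [MeasurableSpace Ω] [MeasurableSpace V]

lemma measurableSet_compliers (hf : ∀ b, Measurable (f b)) : MeasurableSet (compliers f) :=
  (hf false (measurableSet_singleton false)).inter (hf true (measurableSet_singleton true))

variable {μ : Measure Ω} {g : Bool → U → ℝ} {z : Ω → Bool} {u : Ω → U} {v : Ω → V}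

lemma integrable_response (hf : ∀ b, Measurable (f b)) (hv : Measurable v)
    (hg : ∀ b, Integrable (fun ω => g b (u ω)) μ) (c : Bool) :
    Integrable (fun ω => g (f c (v ω)) (u ω)) μ :=
  integrable_apply_bool (X := fun b ω => g b (u ω)) ((hf c).comp hv) hg

lemma cexp_response_eq_integral [MeasurableSpace U] [IsFiniteMeasure μ]
    (hf : ∀ b, Measurable (f b)) (hg : ∀ b, Measurable (g b))
    (hgint : ∀ b, Integrable (fun ω => g b (u ω)) μ) (hz : Measurable z) (hv : Measurable v)
    (hind : IndepFun z (fun ω => (u ω, v ω)) μ) {c : Bool} (hc : μ {ω | z ω = c} ≠ 0) :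
    cexp μ (fun ω => g (f (z ω) (v ω)) (u ω)) {ω | z ω = c} = ∫ ω, g (f c (v ω)) (u ω) ∂μ := by
  have hH : Measurable fun p : U × V => g (f c p.2) p.1 :=
    measurable_apply_bool ((hf c).comp measurable_snd) fun b => (hg b).comp measurable_fst
  rw [cexp_congr μ (E := {ω | z ω = c}) (Y' := fun ω => g (f c (v ω)) (u ω))
    (hz (measurableSet_singleton c)) fun ω (hω : z ω = c) => by rw [hω]]
  exact cexp_preimage_eq_integral_of_indepFun hz (integrable_response hf hv hgint c).aemeasurable
    (hind.comp measurable_id hH) (measurableSet_singleton c) hc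

lemma cexp_sub_cexp_eq_setIntegral_compliers [MeasurableSpace U] [IsFiniteMeasure μ]
    (hf : ∀ b, Measurable (f b)) (hmono : ∀ w, f false w = true → f true w = true)
    (hg : ∀ b, Measurable (g b))
    (hgint : ∀ b, Integrable (fun ω => g b (u ω)) μ) (hz : Measurable z) (hv : Measurable v)
    (hind : IndepFun z (fun ω => (u ω, v ω)) μ)
    (h1 : μ {ω | z ω = true} ≠ 0) (h0 : μ {ω | z ω = false} ≠ 0) :
    cexp μ (fun ω => g (f (z ω) (v ω)) (u ω)) {ω | z ω = true}
        - cexp μ (fun ω => g (f (z ω) (v ω)) (u ω)) {ω | z ω = false}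
      = ∫ ω in v ⁻¹' compliers f, (g true (u ω) - g false (u ω)) ∂μ := by
  rw [cexp_response_eq_integral hf hg hgint hz hv hind h1,
    cexp_response_eq_integral hf hg hgint hz hv hind h0,
    ← integral_sub (integrable_response hf hv hgint true) (integrable_response hf hv hgint false),
    ← integral_indicator (hv (measurableSet_compliers hf))]
  congr 1 with ω
  rw [apply_sub_apply_eq_indicator_compliers hmono (fun b => g b (u ω))]
  rfl

end Compliers

theorem two_sample_wald_ratio_identifies_late_general
    {Ωa Ωb V U : Type*} [MeasurableSpace Ωa] [MeasurableSpace Ωb]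
    [MeasurableSpace V] [MeasurableSpace U]
    -- common exposure equation (structural invariance)
    (f : Bool → V → Bool) (hfmeas : ∀ b, Measurable (f b))
    -- sample a
    (μa : Measure Ωa) [IsProbabilityMeasure μa]
    (za : Ωa → Bool) (hzameas : Measurable za)
    (va : Ωa → V) (hvameas : Measurable va)
    (ua : Ωa → U)
    (hindepa : IndepFun za (fun ω => (ua ω, va ω)) μa)
    (hmonoa : ∀ w : V, f false w = true → f true w = true)
    (hza1 : 0 < μa {ω | za ω = true}) (hza0 : 0 < μa {ω | za ω = false})
    (xa : Ωa → ℝ) (hxa : xa = fun ω => if f (za ω) (va ω) then (1 : ℝ) else 0)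
    (Ca : Set Ωa) (hCa : Ca = {ω | f false (va ω) = false ∧ f true (va ω) = true})
    -- sample b
    (μb : Measure Ωb) [IsProbabilityMeasure μb]
    (zb : Ωb → Bool) (hzbmeas : Measurable zb)
    (vb : Ωb → V) (hvbmeas : Measurable vb)
    (ub : Ωb → U)
    (gb : Bool → U → ℝ) (hgbmeas : ∀ b, Measurable (gb b))
    (hgbint : ∀ b, Integrable (fun ω => gb b (ub ω)) μb)
    (hindepb : IndepFun zb (fun ω => (ub ω, vb ω)) μb)
    (hzb1 : 0 < μb {ω | zb ω = true}) (hzb0 : 0 < μb {ω | zb ω = false})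
    (yb : Ωb → ℝ) (hyb : yb = fun ω => gb (f (zb ω) (vb ω)) (ub ω))
    (Cb : Set Ωb) (hCb : Cb = {ω | f false (vb ω) = false ∧ f true (vb ω) = true})
    -- sampling homogeneity of the exposure noise
    (hvid : IdentDistrib va vb μa μb)
    -- two-sample Wald ratio
    (βab : ℝ)
    (hβab : βab = (cexp μb yb {ω | zb ω = true} - cexp μb yb {ω | zb ω = false}) /
      (cexp μa xa {ω | za ω = true} - cexp μa xa {ω | za ω = false})) :
    μa Ca = μb Cb ∧
    (0 < μb Cb →
      βab = cexp μb (fun ω => gb true (ub ω) - gb false (ub ω)) Cb) := by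
  subst hxa hyb hCa hCb hβab
  have hPC : μa (va ⁻¹' compliers f) = μb (vb ⁻¹' compliers f) :=
    hvid.measure_mem_eq (measurableSet_compliers hfmeas)
  refine ⟨hPC, fun _ => ?_⟩
  have hnum := cexp_sub_cexp_eq_setIntegral_compliers hfmeas hmonoa hgbmeas hgbint hzbmeas hvbmeas
    hindepb hzb1.ne' hzb0.ne'
  have hden : cexp μa (fun ω => if f (za ω) (va ω) then (1 : ℝ) else 0) {ω | za ω = true}
      - cexp μa (fun ω => if f (za ω) (va ω) then (1 : ℝ) else 0) {ω | za ω = false}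
      = μa.real (va ⁻¹' compliers f) := by
    simpa using cexp_sub_cexp_eq_setIntegral_compliers
      (g := fun b (_ : U) => if b then (1 : ℝ) else 0) hfmeas hmonoa (fun _ => measurable_const)
      (fun _ => integrable_const _) hzameas hvameas hindepa hza1.ne' hza0.ne'
  rw [hnum, hden, cexp, measureReal_def, hPC]
  rfl

/-- Proposition 3: in the two-sample binary-IV setting with
structural invariance of the exposure equation (`f^a = f^b = f`) and sampling
homogeneity of the exposure noise (`v^a ~ v^b`), the complier proportions
agree, `P(C^a) = P(C^b)`, and the two-sample Wald ratio identifies the LATE of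
sample `b`. -/
theorem two_sample_wald_ratio_identifies_late
    {Ωa Ωb V U : Type*} [MeasurableSpace Ωa] [MeasurableSpace Ωb]
    [MeasurableSpace V] [MeasurableSpace U]
    -- common exposure equation (structural invariance)
    (f : Bool → V → Bool) (hfmeas : ∀ b, Measurable (f b))
    -- sample a
    (μa : Measure Ωa) [IsProbabilityMeasure μa]
    (za : Ωa → Bool) (hzameas : Measurable za)
    (va : Ωa → V) (hvameas : Measurable va)
    (ua : Ωa → U) (huameas : Measurable ua)
    (ga : Bool → U → ℝ) (hgameas : ∀ b, Measurable (ga b))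
    (hgaint : ∀ b, Integrable (fun ω => ga b (ua ω)) μa)
    (hindepa : IndepFun za (fun ω => (ua ω, va ω)) μa)
    (hmonoa : ∀ w : V, f false w = true → f true w = true)
    (hza1 : 0 < μa {ω | za ω = true}) (hza0 : 0 < μa {ω | za ω = false})
    (xa : Ωa → ℝ) (hxa : xa = fun ω => if f (za ω) (va ω) then (1 : ℝ) else 0)
    (Ca : Set Ωa) (hCa : Ca = {ω | f false (va ω) = false ∧ f true (va ω) = true})
    -- sample b
    (μb : Measure Ωb) [IsProbabilityMeasure μb]
    (zb : Ωb → Bool) (hzbmeas : Measurable zb)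
    (vb : Ωb → V) (hvbmeas : Measurable vb)
    (ub : Ωb → U) (hubmeas : Measurable ub)
    (gb : Bool → U → ℝ) (hgbmeas : ∀ b, Measurable (gb b))
    (hgbint : ∀ b, Integrable (fun ω => gb b (ub ω)) μb)
    (hindepb : IndepFun zb (fun ω => (ub ω, vb ω)) μb)
    (hzb1 : 0 < μb {ω | zb ω = true}) (hzb0 : 0 < μb {ω | zb ω = false})
    (yb : Ωb → ℝ) (hyb : yb = fun ω => gb (f (zb ω) (vb ω)) (ub ω))
    (Cb : Set Ωb) (hCb : Cb = {ω | f false (vb ω) = false ∧ f true (vb ω) = true})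
    -- sampling homogeneity of the exposure noise
    (hvid : IdentDistrib va vb μa μb)
    -- two-sample Wald ratio
    (βab : ℝ)
    (hβab : βab = (cexp μb yb {ω | zb ω = true} - cexp μb yb {ω | zb ω = false}) /
      (cexp μa xa {ω | za ω = true} - cexp μa xa {ω | za ω = false})) :
    μa Ca = μb Cb ∧
    (0 < μb Cb →
      βab = cexp μb (fun ω => gb true (ub ω) - gb false (ub ω)) Cb) :=
  two_sample_wald_ratio_identifies_late_general f hfmeas μa za hzameas va hvameas ua hindepa hmonoa
    hza1 hza0 xa hxa Ca hCa μb zb hzbmeas vb hvbmeas ub gb hgbmeas hgbint hindepb hzb1 hzb0 yb hyb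
    Cb hCb hvid βab hβab
end
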